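/- For 0 ≤ h ≤ m−u−v+w and any x ∈ F_{m,u,v,w}, the number of pairs (a,b) ∈ E_{m,u+h} × E_{m,v+h} with a − b = x equals 3^h · C(m−u−v+w, h). -/

import Mathlib

open Finset

abbrev G4 : Type := ZMod 4 × ZMod 4

def L1 : Finset G4 := {(0,0),(0,1),(1,0)}

def L2 : Finset G4 := {(3,3)}

def N11 : Finset G4 := {(0,1),(0,3),(1,0),(3,0),(1,3),(3,1)}

def N12 : Finset G4 := {(1,1),(1,2),(2,1)}

def N21 : Finset G4 := {(3,3),(3,2),(2,3)}

def N22 : Finset G4 := {(0,0)}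

/-- The number of coordinates of `z` lying in `A`. -/
def cnt {m : ℕ} (A : Finset G4) (z : Fin m → G4) : ℕ :=
  (univ.filter fun i => z i ∈ A).card

/-- `E_{m,i}`: the union of all products of `i` copies of `L₁` and `m - i` copies of `L₂`. -/
def E (m i : ℕ) : Finset (Fin m → G4) :=
  univ.filter fun x => (∀ j, x j ∈ L1 ∪ L2) ∧ cnt L1 x = i

/-- `F_{m,a,b,c,d}`: tuples with exactly `a` coordinates in `N₁₁`, `b` in `N₁₂`,
`c` in `N₂₁` and `d` in `N₂₂`. -/
def Fset (m a b c d : ℕ) : Finset (Fin m → G4) :=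
  univ.filter fun z => (∀ j, z j ∈ N11 ∪ N12 ∪ N21 ∪ N22) ∧
    cnt N11 z = a ∧ cnt N12 z = b ∧ cnt N21 z = c ∧ cnt N22 z = d

/-!
A pair `(a, b)` with `a - b = x` is determined by `a`, so we count the `a ∈ (L₁ ∪ L₂)^m` with
`a - x ∈ (L₁ ∪ L₂)^m`. At a coordinate with `x_j ≠ 0` (i.e. `x_j ∈ N₁₁ ∪ N₁₂ ∪ N₂₁`) exactly one
`a_j` is admissible, and whether `a_j`, resp. `a_j - x_j`, lies in `L₁` is dictated by the class
of `x_j`; these coordinates contribute `u` to the `L₁`-count of `a` and `v` to that of `a - x`.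
At the `m - u - v + w` coordinates with `x_j = 0` we have `a_j = b_j ∈ L₁ ∪ L₂` freely, so the
condition is that exactly `h` of them lie in `L₁` (`3` choices each) and the others equal `(3,3)`.
-/

open Fintype

theorem card_filter_product_sub_eq {G : Type*} [AddCommGroup G] [DecidableEq G]
    (s t : Finset G) (x : G) :
    #{p ∈ s ×ˢ t | p.1 - p.2 = x} = #{a ∈ s | a - x ∈ t} := by
  refine card_bij' (fun p _ => p.1) (fun a _ => (a, a - x)) ?_ ?_ ?_ ?_
  · rintro ⟨a, b⟩ h
    simp only [mem_filter, mem_product] at h ⊢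
    obtain ⟨⟨ha, hb⟩, rfl⟩ := h
    simpa using And.intro ha hb
  · intro a h
    simp only [mem_filter, mem_product] at h ⊢
    simpa using h
  · rintro ⟨a, b⟩ h
    simp [← (mem_filter.1 h).2]
  · intro a _; rfl

section
variable {ι α : Type*} [Fintype ι] [DecidableEq ι] [DecidableEq α]

theorem filter_piFinset_filter_eq_piFinset (s : ι → Finset α) (t : Finset α)
    {D K : Finset ι} (hKD : K ⊆ D) :
    {f ∈ piFinset s | {i ∈ D | f i ∈ t} = K} =
      piFinset fun i => if i ∈ K then s i ∩ t else if i ∈ D then s i \ t else s i := by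
  ext f
  simp only [mem_filter, mem_piFinset, Finset.ext_iff]
  grind

theorem card_filter_piFinset_card_filter_eq (s : ι → Finset α) (t : Finset α)
    (D : Finset ι) (k : ℕ) :
    #{f ∈ piFinset s | #{i ∈ D | f i ∈ t} = k} =
      ∑ K ∈ D.powersetCard k,
        ∏ i, #(if i ∈ K then s i ∩ t else if i ∈ D then s i \ t else s i) := by
  rw [card_eq_sum_card_fiberwise (f := fun f => {i ∈ D | f i ∈ t}) (t := D.powersetCard k)]
  · refine sum_congr rfl fun K hK => ?_
    obtain ⟨hKD, rfl⟩ := mem_powersetCard.1 hK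
    rw [filter_filter, ← card_piFinset, ← filter_piFinset_filter_eq_piFinset s t hKD]
    congr 1
    exact filter_congr fun f _ => ⟨And.right, fun h => ⟨h ▸ rfl, h⟩⟩
  · intro f hf
    exact mem_powersetCard.2 ⟨filter_subset _ _, (mem_filter.1 hf).2⟩
end

def diffFiber (y : G4) : Finset G4 := {c ∈ L1 ∪ L2 | c - y ∈ L1 ∪ L2}

theorem card_diffFiber_of_notMem_N22 :
    ∀ y ∈ N11 ∪ N12 ∪ N21 ∪ N22, y ∉ N22 → #(diffFiber y) = 1 := by decide

theorem card_diffFiber_inter_L1_of_mem_N22 : ∀ y ∈ N22, #(diffFiber y ∩ L1) = 3 := by decide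

theorem card_diffFiber_sdiff_L1_of_mem_N22 : ∀ y ∈ N22, #(diffFiber y \ L1) = 1 := by decide

theorem ite_mem_L1_of_mem_diffFiber : ∀ y ∈ N11 ∪ N12 ∪ N21 ∪ N22, ∀ c ∈ diffFiber y,
    (if c ∈ L1 then 1 else 0 : ℕ) =
      (if y ∈ N11 then 1 else 0) + (if y ∈ N12 then 1 else 0) +
        (if y ∈ N22 ∧ c ∈ L1 then 1 else 0) := by decide

theorem ite_sub_mem_L1_of_mem_diffFiber : ∀ y ∈ N11 ∪ N12 ∪ N21 ∪ N22, ∀ c ∈ diffFiber y,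
    (if c - y ∈ L1 then 1 else 0 : ℕ) =
      (if y ∈ N11 then 1 else 0) + (if y ∈ N21 then 1 else 0) +
        (if y ∈ N22 ∧ c ∈ L1 then 1 else 0) := by decide

section
variable {m : ℕ} {x a : Fin m → G4}

theorem cnt_L1_of_mem_diffFiber (hx : ∀ j, x j ∈ N11 ∪ N12 ∪ N21 ∪ N22)
    (ha : ∀ j, a j ∈ diffFiber (x j)) :
    cnt L1 a = cnt N11 x + cnt N12 x + #{j | x j ∈ N22 ∧ a j ∈ L1} := by
  simp only [cnt, card_filter, ← sum_add_distrib]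
  exact sum_congr rfl fun j _ => ite_mem_L1_of_mem_diffFiber _ (hx j) _ (ha j)

theorem cnt_L1_sub_of_mem_diffFiber (hx : ∀ j, x j ∈ N11 ∪ N12 ∪ N21 ∪ N22)
    (ha : ∀ j, a j ∈ diffFiber (x j)) :
    cnt L1 (a - x) = cnt N11 x + cnt N21 x + #{j | x j ∈ N22 ∧ a j ∈ L1} := by
  simp only [cnt, card_filter, ← sum_add_distrib, Pi.sub_apply]
  exact sum_congr rfl fun j _ => ite_sub_mem_L1_of_mem_diffFiber _ (hx j) _ (ha j)

theorem filter_sub_mem_E_eq {u v w d h : ℕ} (hwu : w ≤ u) (hwv : w ≤ v)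
    (hx : x ∈ Fset m w (u - w) (v - w) d) :
    {a ∈ E m (u + h) | a - x ∈ E m (v + h)} =
      {a ∈ piFinset fun j => diffFiber (x j) |
        #{j ∈ ({j | x j ∈ N22} : Finset (Fin m)) | a j ∈ L1} = h} := by
  simp only [Fset, mem_filter, mem_univ, true_and] at hx
  obtain ⟨hxN, h11, h12, h21, -⟩ := hx
  ext a
  simp only [E, mem_filter, mem_univ, true_and, mem_piFinset, filter_filter, Pi.sub_apply]
  constructor
  · rintro ⟨⟨haL, hcnt⟩, hsubL, -⟩
    have ha : ∀ j, a j ∈ diffFiber (x j) := fun j => mem_filter.2 ⟨haL j, hsubL j⟩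
    have := cnt_L1_of_mem_diffFiber hxN ha
    exact ⟨ha, by omega⟩
  · rintro ⟨ha, hcnt⟩
    have := cnt_L1_of_mem_diffFiber hxN ha
    have := cnt_L1_sub_of_mem_diffFiber hxN ha
    exact ⟨⟨fun j => (mem_filter.1 (ha j)).1, by omega⟩, fun j => (mem_filter.1 (ha j)).2,
      by omega⟩

theorem prod_card_ite_diffFiber_eq (hx : ∀ j, x j ∈ N11 ∪ N12 ∪ N21 ∪ N22) {K : Finset (Fin m)}
    (hK : K ⊆ ({j | x j ∈ N22} : Finset (Fin m))) :
    ∏ j, #(if j ∈ K then diffFiber (x j) ∩ L1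
      else if j ∈ ({j | x j ∈ N22} : Finset (Fin m)) then diffFiber (x j) \ L1
      else diffFiber (x j)) = 3 ^ #K := by
  calc _ = ∏ j, if j ∈ K then 3 else 1 := by
        refine prod_congr rfl fun j _ => ?_
        split_ifs with hjK hjD
        · exact card_diffFiber_inter_L1_of_mem_N22 _ (mem_filter.1 (hK hjK)).2
        · exact card_diffFiber_sdiff_L1_of_mem_N22 _ (mem_filter.1 hjD).2
        · exact card_diffFiber_of_notMem_N22 _ (hx j) (by simpa using hjD)
    _ = 3 ^ #K := by rw [Fintype.prod_ite_mem, prod_const]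

end

theorem stmt15_general (m u v w h : ℕ) (hwu : w ≤ u) (hwv : w ≤ v)
    (x : Fin m → G4) (hx : x ∈ Fset m w (u - w) (v - w) (m + w - u - v)) :
    ((E m (u + h) ×ˢ E m (v + h)).filter fun p => p.1 - p.2 = x).card
      = 3 ^ h * (m + w - u - v).choose h := by
  rw [card_filter_product_sub_eq, filter_sub_mem_E_eq hwu hwv hx,
    card_filter_piFinset_card_filter_eq]
  simp only [Fset, mem_filter, mem_univ, true_and] at hx
  obtain ⟨hxN, -, -, -, hD⟩ := hx
  rw [cnt] at hD
  rw [sum_const_nat fun K hK => ?_, card_powersetCard, hD, mul_comm]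
  obtain ⟨hKD, rfl⟩ := mem_powersetCard.1 hK
  exact prod_card_ite_diffFiber_eq hxN hKD

theorem stmt15 (m u v w h : ℕ) (hwu : w ≤ u) (hwv : w ≤ v) (hum : u ≤ m) (hvm : v ≤ m)
    (huv : u + v ≤ m + w) (hh : h ≤ m + w - u - v)
    (x : Fin m → G4) (hx : x ∈ Fset m w (u - w) (v - w) (m + w - u - v)) :
    ((E m (u + h) ×ˢ E m (v + h)).filter fun p => p.1 - p.2 = x).card
      = 3 ^ h * (m + w - u - v).choose h :=
  stmt15_general m u v w h hwu hwv x hx
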